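/- arXiv:2402.16884 — 6 statements merged into one kernel-verified Lean document; each statement's English description precedes it below -/
import Mathlib

section
/- Fix u_1,…,u_n ∈ ℤ^n, q_{k+1},…,q_n ∈ ℤ^n, a ∈ ℝ^n, and p_1,…,p_k, v_1,…,v_n ∈ ℤ^n such that ∑_{j=1}^n ⟨p_l, v_j⟩⟨u_j, q_i⟩ = 0 for all l = 1,…,k and i = k+1,…,n. For i = k+1,…,n set I⁺_i = {j ∈ {1,…,n} : ⟨u_j, q_i⟩ ≥ 0}, I⁻_i = {j : ⟨u_j, q_i⟩ ≤ 0}, and define f_i : ℂ^n → ℂ by f_i(z) = ∏_{j∈I⁺_i} z_j^{⟨u_j,q_i⟩} − e^{⟨a,q_i⟩} ∏_{j∈I⁻_i} z_j^{−⟨u_j,q_i⟩} (empty products equal 1; all occurring exponents are nonnegative integers). Then for every t = (t_1,…,t_k) ∈ ℂ^k with |t_l| = 1 for all l, and every z ∈ ℂ^n, one has f_i(i_V(t)·z) = 𝒯_i(t) · f_i(z), where (i_V(t)·z)_j = (∏_{l=1}^k t_l^{⟨p_l,v_j⟩}) z_j and 𝒯_i(t) = ∏_{j∈I⁻_i} ∏_{l=1}^k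 t_l^{−⟨p_l,v_j⟩⟨u_j,q_i⟩}. -/
/-!
Write `χⱼ = ∏ₗ tₗ ^ ⟨pₗ, vⱼ⟩` for the weight by which `t` acts on `zⱼ`, and `bⱼ = ⟨uⱼ, qᵢ⟩`.
The hypothesis on the pairings says exactly that `∏ⱼ χⱼ ^ bⱼ = 1`, i.e. the positive and the
negative part of the exponent vector `b` carry the same weight
`∏ⱼ χⱼ ^ bⱼ⁺ = ∏ⱼ χⱼ ^ bⱼ⁻ = 𝒯ᵢ(t)`. Both monomials of the binomial `fᵢ` are therefore
multiplied by `𝒯ᵢ(t)`.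
-/

open Finset

section

variable {ι κ G : Type*}

theorem prod_zpow_eq_zpow_sum₀ [CommGroupWithZero G] {x : G} (hx : x ≠ 0) (s : Finset ι)
    (e : ι → ℤ) : ∏ j ∈ s, x ^ e j = x ^ ∑ j ∈ s, e j := by
  induction s using Finset.cons_induction with
  | empty => simp
  | cons a s ha ih => rw [prod_cons, sum_cons, ih, zpow_add₀ hx]

theorem prod_zpow_zpow [DivisionCommMonoid G] (s : Finset κ) (t : κ → G) (e : κ → ℤ) (m : ℤ) :
    (∏ l ∈ s, t l ^ e l) ^ m = ∏ l ∈ s, t l ^ (e l * m) := by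
  simp only [← prod_zpow, zpow_mul]

theorem prod_prod_zpow_zpow [CommGroupWithZero G] [Fintype ι] [Fintype κ] {t : κ → G}
    (ht : ∀ l, t l ≠ 0) (A : κ → ι → ℤ) (b : ι → ℤ) :
    ∏ j, (∏ l, t l ^ A l j) ^ b j = ∏ l, t l ^ ∑ j, A l j * b j := by
  simp only [prod_zpow_zpow]
  rw [prod_comm]
  exact prod_congr rfl fun l _ => prod_zpow_eq_zpow_sum₀ (ht l) _ _

variable [Fintype ι]

theorem prod_filter_nonneg_pow_toNat [CommMonoid G] (x : ι → G) (b : ι → ℤ) :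
    ∏ j ∈ univ.filter (fun j => 0 ≤ b j), x j ^ (b j).toNat = ∏ j, x j ^ (b j).toNat :=
  prod_filter_of_ne fun j _ hj => by
    by_contra hb
    simp [Int.toNat_of_nonpos (le_of_not_ge hb)] at hj

theorem prod_filter_nonpos_pow_toNat_neg [CommMonoid G] (x : ι → G) (b : ι → ℤ) :
    ∏ j ∈ univ.filter (fun j => b j ≤ 0), x j ^ (-b j).toNat = ∏ j, x j ^ (-b j).toNat := by
  simpa only [Pi.neg_apply, neg_nonneg] using prod_filter_nonneg_pow_toNat x (-b)

theorem prod_pow_toNat_eq_prod_pow_toNat_neg [CommGroupWithZero G] {x : ι → G}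
    (hx : ∀ j, x j ≠ 0) {b : ι → ℤ} (h : ∏ j, x j ^ b j = 1) :
    ∏ j, x j ^ (b j).toNat = ∏ j, x j ^ (-b j).toNat := by
  have hsplit : ∀ j, x j ^ b j = x j ^ (b j).toNat / x j ^ (-b j).toNat := fun j => by
    rw [← zpow_natCast, ← zpow_natCast, ← zpow_sub₀ (hx j), Int.toNat_sub_toNat_neg]
  rwa [prod_congr rfl fun j _ => hsplit j, prod_div_distrib,
    div_eq_one_iff_eq (prod_ne_zero_iff.2 fun j _ => pow_ne_zero _ (hx j))] at h

end

/-- `T^k`-equivariance of the defining equations `f i` of the compactified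
subtorus: `f i (i_V(t) · z) = 𝒯 i (t) * f i z` for all `t` with `|t l| = 1` and all `z`. -/
theorem stmt3 (n k : ℕ)
    (u : Fin n → Fin n → ℤ) (q : Fin (n - k) → Fin n → ℤ)
    (a : Fin n → ℝ) (p : Fin k → Fin n → ℤ) (v : Fin n → Fin n → ℤ)
    (hsum : ∀ (l : Fin k) (i : Fin (n - k)),
      ∑ j, (∑ m, p l m * v j m) * (∑ m, u j m * q i m) = 0)
    (f : Fin (n - k) → (Fin n → ℂ) → ℂ)
    (hf : ∀ i z, f i z =
      (∏ j ∈ univ.filter fun j => 0 ≤ ∑ m, u j m * q i m,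
        z j ^ (∑ m, u j m * q i m).toNat)
      - (Real.exp (∑ m, a m * (q i m : ℝ)) : ℂ) *
        ∏ j ∈ univ.filter fun j => (∑ m, u j m * q i m) ≤ 0,
          z j ^ (-∑ m, u j m * q i m).toNat)
    (t : Fin k → ℂ) (ht : ∀ l, ‖t l‖ = 1) :
    ∀ (i : Fin (n - k)) (z : Fin n → ℂ),
      f i (fun j => (∏ l, t l ^ (∑ m, p l m * v j m)) * z j)
      = (∏ j ∈ univ.filter fun j => (∑ m, u j m * q i m) ≤ 0,
          ∏ l, t l ^ (-(∑ m, p l m * v j m) * (∑ m, u j m * q i m)))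
        * f i z := by
  intro i z
  have ht0 : ∀ l, t l ≠ 0 := fun l h => by simpa [h] using ht l
  have hχ : ∀ j, ∏ l, t l ^ (∑ m, p l m * v j m) ≠ 0 := fun j =>
    prod_ne_zero_iff.2 fun l _ => zpow_ne_zero _ (ht0 l)
  have hrelation : ∏ j, (∏ l, t l ^ (∑ m, p l m * v j m)) ^ (∑ m, u j m * q i m) = 1 := by
    simp only [prod_prod_zpow_zpow ht0, hsum _ i, zpow_zero, prod_const_one]
  have hbalance := prod_pow_toNat_eq_prod_pow_toNat_neg hχ hrelation
  have hT : ∏ j ∈ univ.filter fun j => (∑ m, u j m * q i m) ≤ 0,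
      ∏ l, t l ^ (-(∑ m, p l m * v j m) * (∑ m, u j m * q i m)) =
      ∏ j, (∏ l, t l ^ (∑ m, p l m * v j m)) ^ (-∑ m, u j m * q i m).toNat := by
    rw [← prod_filter_nonpos_pow_toNat_neg]
    refine prod_congr rfl fun j hj => ?_
    rw [← zpow_natCast, Int.toNat_of_nonneg (neg_nonneg.2 (mem_filter.1 hj).2), prod_zpow_zpow]
    simp only [neg_mul, mul_neg]
  rw [hf, hf, hT]
  simp only [mul_pow, prod_mul_distrib, hbalance,
    prod_filter_nonneg_pow_toNat fun j => ∏ l, t l ^ (∑ m, p l m * v j m),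
    prod_filter_nonpos_pow_toNat_neg fun j => ∏ l, t l ^ (∑ m, p l m * v j m)]
  ring
end

section
/- Let p_1,…,p_k, v_1,…,v_n ∈ ℤ^n and a ∈ ℝ^n, and let C_λ(V) ⊂ ℂ^n be the image of the map ℂ^k → ℂ^n sending w = (w_1,…,w_k) to the point with i-th coordinate exp(⟨a, v_i⟩ + ∑_{l=1}^k ⟨p_l, v_i⟩ w_l). Then for every z in the topological closure C̄_λ(V) of C_λ(V) in ℂ^n, there exists t = (t_1,…,t_k) ∈ ℂ^k with |t_l| = 1 for all l such that i_V(t)·z = (|z_1|,…,|z_n|), i.e. (∏_{l=1}^k t_l^{⟨p_l,v_i⟩}) z_i = |z_i| for every i = 1,…,n. In particular, for a point z ∈ C_λ(V) with z_i = exp(∑_l ⟨p_l,v_i⟩ u_l + ⟨a,v_i⟩ + √−1 ∑_l ⟨p_l,v_i⟩ v_l) (u_l, v_l ∈ ℝ), the choice t_l = exp(−√−1 v_l) works, and then |z_i| = exp(∑_l ⟨p_l,v_i⟩ u_l + ⟨a,v_i⟩). -/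
open Finset

/-! The phase `exp (-i Im w_l)` undoes the imaginary part of each parameter, so every point of
`C_λ(V)` is moved to its vector of absolute values by an element of `T^k`. The set of points
admitting such a `t` is closed, being the projection along the compact torus of a closed
subset of `T^k × ℂ^n`; hence it contains the closure of `C_λ(V)`. -/

theorem isClosed_setOf_exists_of_compactSpace {K Y : Type*} [TopologicalSpace K]
    [CompactSpace K] [TopologicalSpace Y] {P : K → Y → Prop}
    (hP : IsClosed {q : K × Y | P q.1 q.2}) : IsClosed {y | ∃ x, P x y} := by
  convert isClosedMap_snd_of_compactSpace _ hP using 1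
  ext y
  simp

namespace Complex

variable {ι : Type*} [Fintype ι]

theorem norm_exp_ofReal_add_sum_intCast_mul (c : ι → ℤ) (A : ℝ) (w : ι → ℂ) :
    ‖exp (A + ∑ l, (c l : ℂ) * w l)‖ = Real.exp (A + ∑ l, c l * (w l).re) := by
  simp [norm_exp, re_sum]

theorem prod_exp_neg_im_zpow_mul_exp (c : ι → ℤ) (A : ℝ) (w : ι → ℂ) :
    (∏ l, exp (-(I * (w l).im)) ^ c l) * exp (A + ∑ l, (c l : ℂ) * w l)
      = ‖exp (A + ∑ l, (c l : ℂ) * w l)‖ := by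
  rw [norm_exp_ofReal_add_sum_intCast_mul, ofReal_exp]
  simp_rw [← exp_int_mul, ← exp_sum, ← exp_add]
  congr 1
  push_cast
  rw [add_comm, add_assoc, ← sum_add_distrib]
  congr 1
  refine sum_congr rfl fun l _ => ?_
  linear_combination (-(c l : ℂ)) * re_add_im (w l)

end Complex

section PhaseNormalizable

variable {ι κ : Type*} [Fintype κ]

def phaseNormalizable (c : ι → κ → ℤ) : Set (ι → ℂ) :=
  {z | ∃ t : κ → Circle, ∀ i, (∏ l, (t l : ℂ) ^ c i l) * z i = ‖z i‖}

theorem isClosed_phaseNormalizable (c : ι → κ → ℤ) : IsClosed (phaseNormalizable c) := by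
  refine isClosed_setOf_exists_of_compactSpace ?_
  simp only [Set.ofPred_forall]
  refine isClosed_iInter fun i => isClosed_eq (.mul (continuous_finsetProd _ fun l _ => ?_)
    (by fun_prop)) (by fun_prop)
  exact (continuous_subtype_val.comp ((continuous_apply l).comp continuous_fst)).zpow₀ _
    fun _ => Or.inl (Circle.coe_ne_zero _)

theorem exp_mem_phaseNormalizable (c : ι → κ → ℤ) (A : ι → ℝ) (w : κ → ℂ) :
    (fun i => Complex.exp (A i + ∑ l, (c i l : ℂ) * w l)) ∈ phaseNormalizable c :=
  ⟨fun l => Circle.exp (-(w l).im), fun i => by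
    have hcoe : ∀ l, (Circle.exp (-(w l).im) : ℂ) = Complex.exp (-(Complex.I * (w l).im)) :=
      fun l => by simp [Circle.coe_exp, mul_comm, Complex.exp_neg]
    simpa only [hcoe] using Complex.prod_exp_neg_im_zpow_mul_exp (c i) (A i) w⟩

end PhaseNormalizable

/-- Every point of the closure of the local model `C_λ(V)` of the complex
subtorus can be moved by the `T^k`-action to the vector of absolute values of its
coordinates; for points of `C_λ(V)` in exponential form, `t l = exp(−√-1 v l)` works
and `|z i| = exp(∑ l ⟨p l, v i⟩ u l + ⟨a, v i⟩)`. -/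
theorem stmt5 (n k : ℕ)
    (p : Fin k → Fin n → ℤ) (v : Fin n → Fin n → ℤ) (a : Fin n → ℝ)
    (F : (Fin k → ℂ) → (Fin n → ℂ))
    (hF : ∀ w i, F w i = Complex.exp
      (((∑ m, a m * (v i m : ℝ) : ℝ) : ℂ) + ∑ l, ((∑ m, p l m * v i m : ℤ) : ℂ) * w l)) :
    (∀ z ∈ closure (Set.range F),
      ∃ t : Fin k → ℂ, (∀ l, ‖t l‖ = 1) ∧
        ∀ i, (∏ l, t l ^ (∑ m, p l m * v i m)) * z i = ((‖z i‖ : ℝ) : ℂ)) ∧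
    (∀ (uu vv : Fin k → ℝ) (z : Fin n → ℂ),
      (∀ i, z i = Complex.exp
        (((∑ l, (∑ m, p l m * v i m : ℤ) * uu l + ∑ m, a m * (v i m : ℝ) : ℝ) : ℂ)
          + Complex.I * ((∑ l, (∑ m, p l m * v i m : ℤ) * vv l : ℝ) : ℂ))) →
      ∀ i, ((∏ l, Complex.exp (-(Complex.I * (vv l : ℂ))) ^ (∑ m, p l m * v i m)) * z i
              = ((‖z i‖ : ℝ) : ℂ)) ∧
        ‖z i‖
          = Real.exp (∑ l, (∑ m, p l m * v i m : ℤ) * uu l + ∑ m, a m * (v i m : ℝ))) := by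
  set c : Fin n → Fin k → ℤ := fun i l => ∑ m, p l m * v i m
  refine ⟨fun z hz => ?_, fun uu vv z hz i => ?_⟩
  · have hrange : Set.range F ⊆ phaseNormalizable c := by
      rintro _ ⟨w, rfl⟩
      rw [funext (hF w)]
      exact exp_mem_phaseNormalizable c _ w
    obtain ⟨t, ht⟩ := closure_minimal hrange (isClosed_phaseNormalizable c) hz
    exact ⟨fun l => t l, fun l => Circle.norm_coe (t l), ht⟩
  · have hzi : z i = Complex.exp ((∑ m, a m * (v i m : ℝ) : ℝ)
        + ∑ l, (c i l : ℂ) * (uu l + Complex.I * vv l)) := by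
      rw [hz i]
      congr 1
      push_cast
      simp only [c, mul_add, sum_add_distrib, mul_sum]
      push_cast
      ring_nf
    have hphase := Complex.prod_exp_neg_im_zpow_mul_exp (c i) (∑ m, a m * (v i m : ℝ))
      (fun l => uu l + Complex.I * vv l)
    have hnorm := Complex.norm_exp_ofReal_add_sum_intCast_mul (c i) (∑ m, a m * (v i m : ℝ))
      (fun l => uu l + Complex.I * vv l)
    simp only [Complex.add_im, Complex.add_re, Complex.ofReal_im, Complex.ofReal_re,
      Complex.I_mul_im, Complex.I_mul_re, zero_add, add_zero, neg_zero] at hphase hnorm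
    rw [← hzi] at hphase hnorm
    exact ⟨hphase, hnorm.trans (by rw [add_comm])⟩
end

section
/- In the setting of the previous extension formula (u_1,…,u_d, κ_1,…,κ_d, L_j(ξ)=⟨u_j,ξ⟩−κ_j, and v_1,…,v_n with ⟨u_i,v_j⟩=δ_{ij} for i,j ≤ n), for every ξ with L_j(ξ) > 0 for all j = 1,…,d, the point ξ^λ = Ψ_λ(ξ) determined by L_i(ξ^λ) = exp(⟨v_i, ∇G(ξ)⟩ − 1) for i = 1,…,n is given explicitly by ξ^λ = ∑_{i=1}^n ( exp(∑_{j=n+1}^d ⟨v_i, u_j⟩) · L_i(ξ) · ∏_{j=n+1}^d L_j(ξ)^{⟨v_i, u_j⟩} + κ_i ) · v_i ; equivalently, ξ^λ = Q^λ · (c + κ), where Q^λ = [v_1 ⋯ v_n] and c_i = exp(∑_{j=n+1}^d ⟨v_i,u_j⟩) L_i(ξ) ∏_{j=n+1}^d L_j(ξ)^{⟨v_i,u_j⟩}. -/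
open Finset

/-- Explicit formula for the extended transformation `Ψ̄_λ`: for `ξ` with
all `L j ξ > 0`, the point `ξ^λ` determined by `L i ξ^λ = exp(⟨v i, ∇G(ξ)⟩ − 1)` for
`i = 1, …, n` is exactly
`ξ^λ = ∑ i, (exp(∑_{j>n} ⟨v i, u j⟩) * L i ξ * ∏_{j>n} (L j ξ)^{⟨v i, u j⟩} + κ i) • v i`. -/
theorem stmt11 (n d : ℕ) (hnd : n ≤ d)
    (u : Fin d → Fin n → ℝ) (κ : Fin d → ℝ) (v : Fin n → Fin n → ℝ)
    (hδ : ∀ i j : Fin n, ∑ m, u (Fin.castLE hnd i) m * v j m = if i = j then (1 : ℝ) else 0)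
    (L : Fin d → (Fin n → ℝ) → ℝ)
    (hL : ∀ j ξ, L j ξ = ∑ m, u j m * ξ m - κ j) :
    ∀ ξ : Fin n → ℝ, (∀ j, 0 < L j ξ) →
      ∀ xiLam : Fin n → ℝ,
        ((∀ i : Fin n, L (Fin.castLE hnd i) xiLam
            = Real.exp ((∑ m, v i m * ∑ j, (1 + Real.log (L j ξ)) * u j m) - 1)) ↔
         xiLam = ∑ i : Fin n,
           (Real.exp (∑ j ∈ univ.filter fun j : Fin d => n ≤ (j : ℕ), ∑ m, v i m * u j m)
              * L (Fin.castLE hnd i) ξ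
              * (∏ j ∈ univ.filter fun j : Fin d => n ≤ (j : ℕ),
                  L j ξ ^ (∑ m, v i m * u j m))
            + κ (Fin.castLE hnd i)) • v i) := by
  intro ξ hξ xiLam
  -- duality in the other direction: V * U = 1
  have hVU : ∀ m m' : Fin n,
      (∑ i : Fin n, v i m * u (Fin.castLE hnd i) m') = if m = m' then (1:ℝ) else 0 := by
    have hUV : (Matrix.of fun (i : Fin n) m => u (Fin.castLE hnd i) m) *
        (Matrix.of fun m (i : Fin n) => v i m) = 1 := by
      ext i j
      simpa [Matrix.mul_apply, Matrix.one_apply] using hδ i j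
    have h2 := mul_eq_one_comm.mp hUV
    intro m m'
    have h3 := congrFun (congrFun h2 m) m'
    simpa [Matrix.mul_apply, Matrix.one_apply] using h3
  -- the general characterization of xiLam by its L-values
  have main : ∀ C : Fin n → ℝ,
      ((∀ i : Fin n, L (Fin.castLE hnd i) xiLam = C i) ↔
        xiLam = ∑ i : Fin n, (C i + κ (Fin.castLE hnd i)) • v i) := by
    intro C
    constructor
    · intro h
      funext m
      have hcoef : ∀ i : Fin n,
          C i + κ (Fin.castLE hnd i) = ∑ m', u (Fin.castLE hnd i) m' * xiLam m' := by
        intro i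
        have h1 := h i
        rw [hL] at h1
        linarith
      have hs : (∑ i : Fin n, (C i + κ (Fin.castLE hnd i)) • v i) m
          = ∑ i : Fin n, (C i + κ (Fin.castLE hnd i)) * v i m := by
        simp [Finset.sum_apply]
      rw [hs]
      calc xiLam m = ∑ m', (if m = m' then (1:ℝ) else 0) * xiLam m' := by simp
        _ = ∑ m', (∑ i : Fin n, v i m * u (Fin.castLE hnd i) m') * xiLam m' := by
            simp_rw [hVU]
        _ = ∑ i : Fin n, (∑ m', u (Fin.castLE hnd i) m' * xiLam m') * v i m := by
            simp_rw [Finset.sum_mul]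
            rw [Finset.sum_comm]
            exact Finset.sum_congr rfl fun i _ =>
              Finset.sum_congr rfl fun m' _ => by ring
        _ = ∑ i : Fin n, (C i + κ (Fin.castLE hnd i)) * v i m := by
            simp_rw [← hcoef]
    · intro h i
      rw [hL, h]
      have hs : ∀ m : Fin n, (∑ k : Fin n, (C k + κ (Fin.castLE hnd k)) • v k) m
          = ∑ k : Fin n, (C k + κ (Fin.castLE hnd k)) * v k m := by
        intro m; simp [Finset.sum_apply]
      simp_rw [hs]
      have hswap : ∑ m, u (Fin.castLE hnd i) m *
            ∑ k : Fin n, (C k + κ (Fin.castLE hnd k)) * v k m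
          = ∑ k : Fin n, (C k + κ (Fin.castLE hnd k)) *
            ∑ m, u (Fin.castLE hnd i) m * v k m := by
        simp_rw [Finset.mul_sum]
        rw [Finset.sum_comm]
        exact Finset.sum_congr rfl fun k _ =>
          Finset.sum_congr rfl fun m _ => by ring
      rw [hswap]
      simp_rw [hδ i]
      simp [mul_ite]
  -- the key scalar identity
  have key : ∀ i : Fin n,
      Real.exp ((∑ m, v i m * ∑ j, (1 + Real.log (L j ξ)) * u j m) - 1)
        = Real.exp (∑ j ∈ univ.filter fun j : Fin d => n ≤ (j : ℕ), ∑ m, v i m * u j m)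
            * L (Fin.castLE hnd i) ξ
            * ∏ j ∈ univ.filter fun j : Fin d => n ≤ (j : ℕ),
                L j ξ ^ (∑ m, v i m * u j m) := by
    intro i
    have h1 : (∑ m, v i m * ∑ j, (1 + Real.log (L j ξ)) * u j m)
        = ∑ j, (1 + Real.log (L j ξ)) * ∑ m, v i m * u j m := by
      simp_rw [Finset.mul_sum]
      rw [Finset.sum_comm]
      exact Finset.sum_congr rfl fun j _ => Finset.sum_congr rfl fun m _ => by ring
    have hS : ∀ i' : Fin n, (∑ m, v i m * u (Fin.castLE hnd i') m)
        = if i' = i then (1:ℝ) else 0 := fun i' => by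
      rw [← hδ i' i]; exact Finset.sum_congr rfl fun m _ => mul_comm _ _
    have hset : univ.filter (fun j : Fin d => ¬ n ≤ (j : ℕ))
        = univ.map (Fin.castLEEmb hnd) := by
      ext j
      simp only [mem_filter, mem_univ, true_and, mem_map, Fin.castLEEmb_apply, not_le]
      constructor
      · intro hj; exact ⟨⟨(j : ℕ), hj⟩, by ext; rfl⟩
      · rintro ⟨a, rfl⟩; exact a.isLt
    have hlow : ∑ j ∈ univ.filter (fun j : Fin d => ¬ n ≤ (j : ℕ)),
        (1 + Real.log (L j ξ)) * ∑ m, v i m * u j m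
        = 1 + Real.log (L (Fin.castLE hnd i) ξ) := by
      rw [hset, Finset.sum_map]
      simp only [Fin.castLEEmb_apply, hS, mul_ite, mul_one, mul_zero]
      simp
    have hsplit := Finset.sum_filter_add_sum_filter_not (univ : Finset (Fin d))
      (fun j : Fin d => n ≤ (j : ℕ))
      (fun j => (1 + Real.log (L j ξ)) * ∑ m, v i m * u j m)
    have hhigh : ∑ j ∈ (univ.filter fun j : Fin d => n ≤ (j : ℕ)),
        (1 + Real.log (L j ξ)) * ∑ m, v i m * u j m
        = (∑ j ∈ univ.filter fun j : Fin d => n ≤ (j : ℕ), ∑ m, v i m * u j m)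
          + ∑ j ∈ univ.filter fun j : Fin d => n ≤ (j : ℕ),
              Real.log (L j ξ) * ∑ m, v i m * u j m := by
      rw [← Finset.sum_add_distrib]
      exact Finset.sum_congr rfl fun j _ => by ring
    have h2 : (∑ m, v i m * ∑ j, (1 + Real.log (L j ξ)) * u j m) - 1
        = Real.log (L (Fin.castLE hnd i) ξ)
          + ((∑ j ∈ univ.filter fun j : Fin d => n ≤ (j : ℕ), ∑ m, v i m * u j m)
          + ∑ j ∈ univ.filter fun j : Fin d => n ≤ (j : ℕ),
              Real.log (L j ξ) * ∑ m, v i m * u j m) := by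
      rw [h1, ← hsplit, hlow, hhigh]
      ring
    rw [h2, Real.exp_add, Real.exp_add, Real.exp_log (hξ _)]
    have hprod : Real.exp (∑ j ∈ (univ.filter fun j : Fin d => n ≤ (j : ℕ)),
        Real.log (L j ξ) * ∑ m, v i m * u j m)
        = ∏ j ∈ (univ.filter fun j : Fin d => n ≤ (j : ℕ)),
          L j ξ ^ (∑ m, v i m * u j m) := by
      rw [Real.exp_sum]
      exact Finset.prod_congr rfl fun j _ => (Real.rpow_def_of_pos (hξ j) _).symm
    rw [hprod]
    ring
  constructor
  · intro h
    exact (main _).mp fun i => (h i).trans (key i)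
  · intro h i
    rw [key i]
    exact (main _).mpr h i
end

section
/- Let u_1,…,u_n ∈ ℤ^n, q ∈ ℤ^n, a ∈ ℝ^n, κ_1,…,κ_n ∈ ℝ, L_i(ξ) = ⟨u_i,ξ⟩ − κ_i, and G^λ(ξ) = ∑_{i=1}^n L_i(ξ) log L_i(ξ). Set I⁺ = {i : ⟨u_i,q⟩ ≥ 0} and I⁻ = {i : ⟨u_i,q⟩ ≤ 0}. Then for every ξ with L_i(ξ) > 0 for all i, one has ⟨∇G^λ(ξ), q⟩ = log( ∏_{i=1}^n (e·L_i(ξ))^{⟨u_i,q⟩} ), and consequently ⟨∇G^λ(ξ) − a, q⟩ = 0 if and only if ∏_{i∈I⁺} (e·L_i(ξ))^{⟨u_i,q⟩} − e^{⟨a,q⟩} ∏_{i∈I⁻} (e·L_i(ξ))^{−⟨u_i,q⟩} = 0. -/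
/-!
Since `log (e · L) = 1 + log L`, the pairing `⟨∇G^λ(ξ), q⟩ = ∑ i ⟨u_i, q⟩ (1 + log L_i(ξ))` is the
logarithm of `P = ∏ i (e · L_i(ξ)) ^ ⟨u_i, q⟩`. Hence `⟨∇G^λ(ξ) − a, q⟩ = 0` iff `P = e^{⟨a,q⟩}`;
multiplying by the positive product of the negative-exponent factors clears the denominators of `P`,
leaving the product over `I⁺` on the left and `e^{⟨a,q⟩}` times the product over `I⁻` on the right.
-/

open Finset

theorem zpow_mul_pow_toNat_neg {G : Type*} [GroupWithZero G] {x : G} (hx : x ≠ 0) (c : ℤ) :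
    x ^ c * x ^ (-c).toNat = x ^ c.toNat := by
  rw [← zpow_natCast, ← zpow_natCast, ← zpow_add₀ hx]
  congr 1
  omega

theorem prod_zpow_mul_prod_pow_toNat_neg {ι M : Type*} [CommGroupWithZero M] (s : Finset ι)
    {x : ι → M} (hx : ∀ i ∈ s, x i ≠ 0) (c : ι → ℤ) :
    (∏ i ∈ s, x i ^ c i) * ∏ i ∈ s with c i ≤ 0, x i ^ (-c i).toNat
      = ∏ i ∈ s with 0 ≤ c i, x i ^ (c i).toNat := by
  rw [prod_filter_of_ne, prod_filter_of_ne, ← prod_mul_distrib]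
  · exact prod_congr rfl fun i hi => zpow_mul_pow_toNat_neg (hx i hi) (c i)
  · intro i _ hne
    contrapose! hne
    rw [Int.toNat_of_nonpos hne.le, pow_zero]
  · intro i _ hne
    contrapose! hne
    rw [Int.toNat_of_nonpos (by omega), pow_zero]

theorem Real.log_prod_zpow {ι : Type*} (s : Finset ι) {x : ι → ℝ} (hx : ∀ i ∈ s, x i ≠ 0)
    (c : ι → ℤ) : Real.log (∏ i ∈ s, x i ^ c i) = ∑ i ∈ s, c i * Real.log (x i) := by
  rw [Real.log_prod fun i hi => zpow_ne_zero _ (hx i hi)]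
  exact sum_congr rfl fun i _ => Real.log_zpow (x i) (c i)

theorem Real.log_eq_iff_eq_exp {x y : ℝ} (hx : 0 < x) : Real.log x = y ↔ x = Real.exp y := by
  rw [← Real.exp_eq_exp, Real.exp_log hx]

theorem sum_sum_mul_mul_eq_sum_mul_sum {ι κ R : Type*} [CommSemiring R] (s : Finset ι)
    (t : Finset κ) (w : ι → R) (A : ι → κ → R) (v : κ → R) :
    ∑ m ∈ t, (∑ i ∈ s, w i * A i m) * v m = ∑ i ∈ s, w i * ∑ m ∈ t, A i m * v m := by
  simp_rw [sum_mul, mul_sum, mul_assoc]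
  exact sum_comm

theorem stmt12_general (n : ℕ) (u : Fin n → Fin n → ℤ) (q : Fin n → ℤ)
    (a : Fin n → ℝ)
    (L : Fin n → (Fin n → ℝ) → ℝ) :
    ∀ ξ : Fin n → ℝ, (∀ i, 0 < L i ξ) →
      ((∑ m, (∑ i, (1 + Real.log (L i ξ)) * (u i m : ℝ)) * (q m : ℝ)
          = Real.log (∏ i, (Real.exp 1 * L i ξ) ^ (∑ m, u i m * q m))) ∧
       ((∑ m, ((∑ i, (1 + Real.log (L i ξ)) * (u i m : ℝ)) - a m) * (q m : ℝ) = 0 ↔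
         (∏ i ∈ univ.filter fun i => 0 ≤ ∑ m, u i m * q m,
            (Real.exp 1 * L i ξ) ^ (∑ m, u i m * q m).toNat)
         - Real.exp (∑ m, a m * (q m : ℝ)) *
           ∏ i ∈ univ.filter fun i => (∑ m, u i m * q m) ≤ 0,
             (Real.exp 1 * L i ξ) ^ (-∑ m, u i m * q m).toNat
         = 0))) := by
  intro ξ hL
  set x : Fin n → ℝ := fun i => Real.exp 1 * L i ξ
  set c : Fin n → ℤ := fun i => ∑ m, u i m * q m
  have hx (i : Fin n) : 0 < x i := mul_pos (Real.exp_pos 1) (hL i)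
  have hlog_x (i : Fin n) : Real.log (x i) = 1 + Real.log (L i ξ) := by
    rw [Real.log_mul (Real.exp_ne_zero 1) (hL i).ne', Real.log_exp]
  have hgrad : ∑ m, (∑ i, (1 + Real.log (L i ξ)) * (u i m : ℝ)) * (q m : ℝ)
      = Real.log (∏ i, x i ^ c i) := by
    rw [sum_sum_mul_mul_eq_sum_mul_sum, Real.log_prod_zpow _ fun i _ => (hx i).ne']
    refine sum_congr rfl fun i _ => ?_
    rw [hlog_x, mul_comm, Int.cast_sum]
    simp only [Int.cast_mul]
  refine ⟨hgrad, ?_⟩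
  have hneg_pos : 0 < ∏ i with c i ≤ 0, x i ^ (-c i).toNat :=
    prod_pos fun i _ => pow_pos (hx i) _
  rw [← prod_zpow_mul_prod_pow_toNat_neg _ (fun i _ => (hx i).ne') c]
  simp_rw [sub_mul, sum_sub_distrib, hgrad, sub_eq_zero]
  exact (Real.log_eq_iff_eq_exp (prod_pos fun i _ => zpow_pos (hx i) _)).trans
    (mul_left_inj' hneg_pos.ne').symm

/-- On the positivity region of the local model,
`⟨∇G^λ(ξ), q⟩ = log (∏ i, (e * L i ξ) ^ ⟨u i, q⟩)`, and consequently
`⟨∇G^λ(ξ) − a, q⟩ = 0` iff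
`∏_{i ∈ I⁺} (e L i ξ)^{⟨u i,q⟩} − e^{⟨a,q⟩} ∏_{i ∈ I⁻} (e L i ξ)^{−⟨u i,q⟩} = 0`. -/
theorem stmt12 (n : ℕ) (u : Fin n → Fin n → ℤ) (q : Fin n → ℤ)
    (a : Fin n → ℝ) (κ : Fin n → ℝ)
    (L : Fin n → (Fin n → ℝ) → ℝ)
    (hL : ∀ i ξ, L i ξ = ∑ m, (u i m : ℝ) * ξ m - κ i) :
    ∀ ξ : Fin n → ℝ, (∀ i, 0 < L i ξ) →
      ((∑ m, (∑ i, (1 + Real.log (L i ξ)) * (u i m : ℝ)) * (q m : ℝ)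
          = Real.log (∏ i, (Real.exp 1 * L i ξ) ^ (∑ m, u i m * q m))) ∧
       ((∑ m, ((∑ i, (1 + Real.log (L i ξ)) * (u i m : ℝ)) - a m) * (q m : ℝ) = 0 ↔
         (∏ i ∈ univ.filter fun i => 0 ≤ ∑ m, u i m * q m,
            (Real.exp 1 * L i ξ) ^ (∑ m, u i m * q m).toNat)
         - Real.exp (∑ m, a m * (q m : ℝ)) *
           ∏ i ∈ univ.filter fun i => (∑ m, u i m * q m) ≤ 0,
             (Real.exp 1 * L i ξ) ^ (-∑ m, u i m * q m).toNat
         = 0))) :=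
  stmt12_general n u q a L
end

section
/- Let u_1,…,u_n, v_1,…,v_n ∈ ℤ^n with ⟨u_i, v_j⟩ = δ_{ij}, let p_1,…,p_k, q_{k+1},…,q_n ∈ ℤ^n with ⟨p_l, q_i⟩ = 0 for all l, i, let a ∈ ℝ^n and κ ∈ ℝ^n, and set L_j(ξ) = ⟨u_j, ξ⟩ − κ_j, I⁺_i = {j : ⟨u_j,q_i⟩ ≥ 0}, I⁻_i = {j : ⟨u_j,q_i⟩ ≤ 0}. Define f_i : ℂ^n → ℂ by f_i(z) = ∏_{j∈I⁺_i} z_j^{⟨u_j,q_i⟩} − e^{⟨a,q_i⟩} ∏_{j∈I⁻_i} z_j^{−⟨u_j,q_i⟩} and g_i : ℝ^n → ℝ by g_i(ξ) = ∏_{j∈I⁺_i} (e·L_j(ξ))^{⟨u_j,q_i⟩} − e^{⟨a,q_i⟩} ∏_{j∈I⁻_i} (e·L_j(ξ))^{−⟨u_j,q_i⟩} (i = k+1,…,n), and let Df(z) and Dg(ξ) be the complex, resp. real, (n−k)×n Jacobian matrices. Let C_λ(V) ⊂ ℂ^n be the image of w ↦ (exp(⟨a,v_i⟩ + ∑_l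 ⟨p_l,v_i⟩ w_l))_{i=1}^n, w ∈ ℂ^k. Then for every z in the topological closure of C_λ(V) in ℂ^n and every ξ ∈ ℝ^n satisfying |z_j| = e·L_j(ξ) for all j = 1,…,n, the rank over ℂ of Df(z) equals the rank over ℝ of Dg(ξ). -/
/-!
Write `s i j = ⟨u_j, q_i⟩`, so that `f_i(z) = ∏ z^{s_i⁺} - c_i ∏ z^{s_i⁻}` and
`g_i(ξ) = f_i(e·L(ξ))` with real coefficients `c_i`.

The phase of `F w` is `exp(i ∑_l ⟨p_l, v_j⟩ Im w_l)`, and since `u`, `v` are dual bases,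
`∑_j s_ij ⟨p_l, v_j⟩ = ⟨p_l, q_i⟩ = 0`; hence every point of `C_λ(V)` is `t · |z|` with `t` in the
compact torus `{|t_j| = 1, t^{s_i⁺} = t^{s_i⁻}}`. Compactness makes the set of such points
closed, so the same holds on the closure. Substituting `z = t · x` rescales the columns of the
Jacobian of the binomials by `t_j` and its rows by the common value `t^{s_i⁺} = t^{s_i⁻}`, so
`rank Df(z) = rank Df(x)` with `x = |z| = e·L(ξ)` real. Then `Df(x)` is the complexification of
the real Jacobian of the same binomials, which has the same rank, and by the chain rule `Dg(ξ)` is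
that real Jacobian times the invertible matrix `(e · u_jm)`.
-/

open Finset

section Monomial

variable {ι R : Type*} [Fintype ι] [DecidableEq ι] [CommSemiring R]

/-- `∂ⱼ ∏ x^e`; at `e j = 0` the truncated `e j - 1` is harmless because of the factor `e j`. -/
noncomputable def monomialPartial (e : ι → ℕ) (x : ι → R) (j : ι) : R :=
  e j * x j ^ (e j - 1) * ∏ j' ∈ univ.erase j, x j' ^ e j'

lemma monomialPartial_mul (e : ι → ℕ) (t x : ι → R) (j : ι) :
    monomialPartial e (t * x) j * t j = (∏ j', t j' ^ e j') * monomialPartial e x j := by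
  unfold monomialPartial
  rcases Nat.eq_zero_or_pos (e j) with h0 | hpos
  · simp [h0]
  · rw [← mul_prod_erase univ (fun j' => t j' ^ e j') (mem_univ j),
      ← Nat.sub_add_cancel hpos, pow_succ]
    simp only [Pi.mul_apply, mul_pow, prod_mul_distrib, Nat.add_sub_cancel]
    ring

lemma map_monomialPartial {S : Type*} [CommSemiring S] (φ : R →+* S) (e : ι → ℕ) (x : ι → R)
    (j : ι) : φ (monomialPartial e x j) = monomialPartial e (φ ∘ x) j := by
  simp [monomialPartial, map_prod]

end Monomial

section Binomial

open Matrix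

variable {ι κ R : Type*} [Fintype ι] [CommRing R]

noncomputable def binomial (s : ι → ℤ) (c : R) (y : ι → R) : R :=
  ∏ j, y j ^ (s j).toNat - c * ∏ j, y j ^ (-s j).toNat

lemma binomial_eq_prod_filter (s : ι → ℤ) (c : R) (y : ι → R) :
    binomial s c y = ∏ j ∈ univ.filter (fun j => 0 ≤ s j), y j ^ (s j).toNat
      - c * ∏ j ∈ univ.filter (fun j => s j ≤ 0), y j ^ (-s j).toNat := by
  rw [binomial, prod_filter_of_ne, prod_filter_of_ne]
  · intro j _ h
    contrapose! h
    simp [Int.toNat_of_nonpos (neg_nonpos.mpr h.le)]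
  · intro j _ h
    contrapose! h
    simp [Int.toNat_of_nonpos h.le]

variable [DecidableEq ι]

noncomputable def binomialJacobian (s : κ → ι → ℤ) (c : κ → R) (x : ι → R) : Matrix κ ι R :=
  of fun i j => monomialPartial (fun j => (s i j).toNat) x j
    - c i * monomialPartial (fun j => (-s i j).toNat) x j

lemma binomialJacobian_map {S : Type*} [CommRing S] (φ : R →+* S) (s : κ → ι → ℤ) (c : κ → R)
    (x : ι → R) : (binomialJacobian s c x).map φ = binomialJacobian s (φ ∘ c) (φ ∘ x) := by
  ext i j
  simp [binomialJacobian, map_monomialPartial]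

lemma binomialJacobian_mul_diagonal [Fintype κ] [DecidableEq κ] (s : κ → ι → ℤ) (c : κ → R)
    (t x : ι → R) (ht : ∀ i, ∏ j, t j ^ (s i j).toNat = ∏ j, t j ^ (-s i j).toNat) :
    binomialJacobian s c (t * x) * diagonal t
      = diagonal (fun i => ∏ j, t j ^ (s i j).toNat) * binomialJacobian s c x := by
  ext i j
  simp only [mul_diagonal, diagonal_mul, binomialJacobian, of_apply, sub_mul, mul_assoc,
    monomialPartial_mul]
  rw [ht i]
  ring

end Binomial

section Derivative

open Matrix

variable {𝕜 ι ι' κ : Type*} [NontriviallyNormedField 𝕜] [Fintype ι] [DecidableEq ι]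

lemma fderiv_prod_pow_apply_single (e : ι → ℕ) (x : ι → 𝕜) (j : ι) :
    fderiv 𝕜 (fun y : ι → 𝕜 => ∏ j', y j' ^ e j') x (Pi.single j 1) = monomialPartial e x j := by
  have h := HasFDerivAt.finsetProd (u := univ) (x := x) (g := fun j' y => y j' ^ e j')
    fun j' _ => (hasDerivAt_pow (e j') (x j')).comp_hasFDerivAt x
      (ContinuousLinearMap.proj (R := 𝕜) (φ := fun _ : ι => 𝕜) j').hasFDerivAt
  rw [h.fderiv, _root_.sum_apply, Fintype.sum_eq_single j]
  · simp [monomialPartial, mul_comm]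
  · intro j' hj
    simp [hj]

lemma jacobian_binomial (s : κ → ι → ℤ) (c : κ → 𝕜) (x : ι → 𝕜) :
    of (fun i j => fderiv 𝕜 (binomial (s i) (c i)) x (Pi.single j 1))
      = binomialJacobian s c x := by
  ext i j
  have hdiff (e : ι → ℕ) : DifferentiableAt 𝕜 (fun y : ι → 𝕜 => ∏ j', y j' ^ e j') x := by
    fun_prop
  unfold binomial
  rw [of_apply, fderiv_fun_sub (hdiff _) ((hdiff _).const_mul _), fderiv_const_mul (hdiff _)]
  simp [binomialJacobian, fderiv_prod_pow_apply_single]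

variable [CompleteSpace 𝕜] [Fintype ι'] [DecidableEq ι']

lemma fderiv_comp_mulVec_add_apply_single {G : (ι → 𝕜) → 𝕜} (M : Matrix ι ι' 𝕜) (b : ι → 𝕜)
    (ξ : ι' → 𝕜) (hG : DifferentiableAt 𝕜 G (M *ᵥ ξ + b)) (m : ι') :
    fderiv 𝕜 (fun y => G (M *ᵥ y + b)) ξ (Pi.single m 1)
      = ∑ j, fderiv 𝕜 G (M *ᵥ ξ + b) (Pi.single j 1) * M j m := by
  have hA : HasFDerivAt (fun y => M *ᵥ y + b) (toLin' M).toContinuousLinearMap ξ :=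
    (toLin' M).toContinuousLinearMap.hasFDerivAt.add_const b
  have hGA : HasFDerivAt (fun y => G (M *ᵥ y + b)) _ ξ := hG.hasFDerivAt.comp ξ hA
  rw [hGA.fderiv, ContinuousLinearMap.comp_apply, LinearMap.coe_toContinuousLinearMap',
    toLin'_apply, mulVec_single_one, ← univ_sum_single (M.col m), map_sum]
  refine sum_congr rfl fun j _ => ?_
  rw [mul_comm, ← smul_eq_mul, ← map_smul, ← Pi.single_smul, smul_eq_mul, mul_one]
  rfl

lemma jacobian_binomial_comp_mulVec_add (s : κ → ι → ℤ) (c : κ → 𝕜) (M : Matrix ι ι' 𝕜)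
    (b : ι → 𝕜) (ξ : ι' → 𝕜) :
    of (fun i m => fderiv 𝕜 (fun y => binomial (s i) (c i) (M *ᵥ y + b)) ξ (Pi.single m 1))
      = binomialJacobian s c (M *ᵥ ξ + b) * M := by
  ext i m
  rw [of_apply, fderiv_comp_mulVec_add_apply_single _ _ _ (by unfold binomial; fun_prop),
    ← jacobian_binomial]
  rfl

end Derivative

section Rank

open Matrix

lemma Matrix.rank_map_algebraMap {K L m n : Type*} [Field K] [Field L] [Algebra K L]
    [Fintype m] [Fintype n] (A : Matrix m n K) : (A.map (algebraMap K L)).rank = A.rank := by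
  classical
  obtain ⟨κ, a, ha, hspan, hli⟩ := exists_linearIndependent' K A.col
  have : Fintype κ := Fintype.ofInjective a ha
  have hcol (j : n) :
      (A.map (algebraMap K L)).col j = (Algebra.linearMap K L).compLeft m (A.col j) := rfl
  have hli' : LinearIndependent L ((A.map (algebraMap K L)).col ∘ a) :=
    linearIndependent_algebraMap_comp_iff.mpr hli
  have hspan' : Submodule.span L (Set.range ((A.map (algebraMap K L)).col ∘ a))
      = Submodule.span L (Set.range (A.map (algebraMap K L)).col) := by
    refine le_antisymm (Submodule.span_mono (Set.range_comp_subset_range _ _)) ?_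
    rw [Submodule.span_le]
    rintro _ ⟨j, rfl⟩
    have hj : A.col j ∈ Submodule.span K (Set.range (A.col ∘ a)) :=
      hspan ▸ Submodule.subset_span (Set.mem_range_self j)
    refine Submodule.span_le_restrictScalars K L _ ?_
    rw [hcol]
    have hφ := Submodule.mem_map_of_mem (f := (Algebra.linearMap K L).compLeft m) hj
    rwa [Submodule.map_span, ← Set.range_comp] at hφ
  rw [rank_eq_finrank_span_cols, rank_eq_finrank_span_cols, ← hspan, ← hspan',
    finrank_span_eq_card hli, finrank_span_eq_card hli']

lemma rank_binomialJacobian_mul {ι κ K : Type*} [Fintype ι] [DecidableEq ι] [Fintype κ]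
    [DecidableEq κ] [Field K] (s : κ → ι → ℤ) (c : κ → K) (t x : ι → K) (ht0 : ∀ j, t j ≠ 0)
    (ht : ∀ i, ∏ j, t j ^ (s i j).toNat = ∏ j, t j ^ (-s i j).toNat) :
    (binomialJacobian s c (t * x)).rank = (binomialJacobian s c x).rank := by
  have htd : IsUnit (diagonal t).det :=
    (isUnit_iff_isUnit_det _).mp (isUnit_diagonal.mpr (Pi.isUnit_iff.mpr fun j => (ht0 j).isUnit))
  have hTd : IsUnit (diagonal fun i => ∏ j, t j ^ (s i j).toNat).det :=
    (isUnit_iff_isUnit_det _).mp (isUnit_diagonal.mpr (Pi.isUnit_iff.mpr fun i =>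
      (prod_ne_zero_iff.2 fun j _ => pow_ne_zero _ (ht0 j)).isUnit))
  rw [← rank_mul_eq_left_of_isUnit_det _ (binomialJacobian s c (t * x)) htd,
    binomialJacobian_mul_diagonal s c t x ht, rank_mul_eq_right_of_isUnit_det _ _ hTd]

end Rank

section Dual

open Matrix

variable {ι R : Type*} [Fintype ι] [DecidableEq ι] [CommRing R]

lemma of_mul_transpose_of_eq_one (u v : ι → ι → R)
    (hδ : ∀ i j, ∑ m, u i m * v j m = if i = j then 1 else 0) : of u * (of v)ᵀ = 1 := by
  ext i j
  simp [mul_apply, hδ, one_apply]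

lemma sum_mul_sum_eq_of_dual (u v : ι → ι → R)
    (hδ : ∀ i j, ∑ m, u i m * v j m = if i = j then 1 else 0) (p q : ι → R) :
    ∑ j, (∑ m, u j m * q m) * (∑ m, p m * v j m) = ∑ m, p m * q m := by
  have hVU : (of u)ᵀ * of v = 1 := by
    rw [← transpose_transpose (of v), ← transpose_mul,
      mul_eq_one_comm.mp (of_mul_transpose_of_eq_one u v hδ), transpose_one]
  calc ∑ j, (∑ m, u j m * q m) * (∑ m, p m * v j m)
      = (of u *ᵥ q) ⬝ᵥ (of v *ᵥ p) := by simp [dotProduct, mulVec, mul_comm (p _)]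
    _ = q ⬝ᵥ p := by
      rw [dotProduct_mulVec, ← vecMul_transpose, vecMul_vecMul, hVU, vecMul_one]
    _ = ∑ m, p m * q m := by simp [dotProduct, mul_comm]

end Dual

section Phase

open Complex

lemma isClosed_setOf_exists_mul_norm {ι : Type*} {K : Set (ι → ℂ)} (hK : IsCompact K) :
    IsClosed {z : ι → ℂ | ∃ t ∈ K, ∀ j, z j = t j * ‖z j‖} := by
  have : CompactSpace K := isCompact_iff_compactSpace.mp hK
  have hC : IsClosed {p : K × (ι → ℂ) | ∀ j, p.2 j = (p.1 : ι → ℂ) j * ‖p.2 j‖} :=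
    Set.ofPred_forall _ ▸ isClosed_iInter fun j => isClosed_eq (by fun_prop)
      (((continuous_apply j).comp (continuous_subtype_val.comp continuous_fst)).mul (by fun_prop))
  convert isClosedMap_snd_of_compactSpace _ hC using 1
  ext z
  simp

lemma exp_eq_exp_im_mul_I_mul_norm (θ : ℂ) : exp θ = exp (θ.im * I) * ‖exp θ‖ := by
  rw [norm_exp, ofReal_exp, ← exp_add]
  congr 1
  apply Complex.ext <;> simp

variable {ι κ : Type*} [Fintype ι]

def compactSubtorus (s : κ → ι → ℤ) : Set (ι → ℂ) :=
  {t | (∀ j, ‖t j‖ = 1) ∧ ∀ i, ∏ j, t j ^ (s i j).toNat = ∏ j, t j ^ (-s i j).toNat}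

lemma isCompact_compactSubtorus (s : κ → ι → ℤ) : IsCompact (compactSubtorus s) := by
  have hclosed :
      IsClosed {t : ι → ℂ | ∀ i, ∏ j, t j ^ (s i j).toNat = ∏ j, t j ^ (-s i j).toNat} :=
    Set.ofPred_forall _ ▸ isClosed_iInter fun i => isClosed_eq (by fun_prop) (by fun_prop)
  convert (isCompact_univ_pi fun _ => isCompact_sphere (0 : ℂ) 1).inter_right hclosed using 1
  ext t
  simp [compactSubtorus]

lemma prod_exp_pow_toNat_eq (s : ι → ℤ) (θ : ι → ℂ) (h : ∑ j, (s j : ℂ) * θ j = 0) :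
    ∏ j, exp (θ j) ^ (s j).toNat = ∏ j, exp (θ j) ^ (-s j).toNat := by
  simp_rw [← exp_nat_mul, ← exp_sum]
  congr 1
  rw [← sub_eq_zero, ← sum_sub_distrib, ← h]
  refine sum_congr rfl fun j _ => ?_
  rw [← sub_mul]
  exact_mod_cast congrArg (fun m : ℤ => (m : ℂ) * θ j) (Int.toNat_sub_toNat_neg (s j))

lemma exists_mem_compactSubtorus_mul_norm_exp (s : κ → ι → ℤ) (θ : ι → ℂ)
    (h : ∀ i, ∑ j, (s i j : ℝ) * (θ j).im = 0) :
    ∃ t ∈ compactSubtorus s, ∀ j, exp (θ j) = t j * ‖exp (θ j)‖ := by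
  refine ⟨fun j => exp ((θ j).im * I), ⟨fun j => norm_exp_ofReal_mul_I _, fun i => ?_⟩,
    fun j => exp_eq_exp_im_mul_I_mul_norm (θ j)⟩
  refine prod_exp_pow_toNat_eq _ _ ?_
  simp_rw [← mul_assoc, ← sum_mul]
  exact_mod_cast congrArg (fun r : ℝ => (r : ℂ) * I) (h i) |>.trans (zero_mul _)

lemma exists_mem_compactSubtorus_of_mem_closure_range {ν : Type*} [Fintype ν]
    {s : κ → ι → ℤ} {P : ν → ι → ℤ} (hsP : ∀ i l, ∑ j, s i j * P l j = 0) (A : ι → ℝ)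
    {z : ι → ℂ}
    (hz : z ∈ closure (Set.range fun (w : ν → ℂ) j => exp (A j + ∑ l, (P l j : ℂ) * w l))) :
    ∃ t ∈ compactSubtorus s, ∀ j, z j = t j * ‖z j‖ := by
  refine closure_minimal ?_ (isClosed_setOf_exists_mul_norm (isCompact_compactSubtorus s)) hz
  rintro _ ⟨w, rfl⟩
  refine exists_mem_compactSubtorus_mul_norm_exp s _ fun i => ?_
  simp only [add_im, ofReal_im, im_sum, mul_im, intCast_re, intCast_im, zero_mul, add_zero,
    zero_add, mul_sum]
  rw [sum_comm]
  refine sum_eq_zero fun l _ => ?_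
  simp_rw [← mul_assoc, ← sum_mul]
  have hsPl : ∑ j, (s i j : ℝ) * (P l j : ℝ) = 0 := by exact_mod_cast hsP i l
  rw [hsPl, zero_mul]

end Phase

/-- main theorem: For every `z` in the closure of the local model `C_λ(V)` of
the complex subtorus and every `ξ` with `|z j| = e * L j ξ` for all `j`, the rank of the
complex Jacobian `Df(z)` of the chart defining equations `f i` equals the rank of the real
Jacobian `Dg(ξ)` of the defining equations `g i` of `D̄(V)` in the Delzant polytope. -/
theorem stmt13 (n k : ℕ)
    (u v : Fin n → Fin n → ℤ)
    (hδ : ∀ i j, ∑ m, u i m * v j m = if i = j then (1 : ℤ) else 0)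
    (p : Fin k → Fin n → ℤ) (q : Fin (n - k) → Fin n → ℤ)
    (hpq : ∀ (l : Fin k) (i : Fin (n - k)), ∑ m, p l m * q i m = 0)
    (a : Fin n → ℝ) (κ : Fin n → ℝ)
    (L : Fin n → (Fin n → ℝ) → ℝ)
    (hL : ∀ j ξ, L j ξ = ∑ m, (u j m : ℝ) * ξ m - κ j)
    (f : Fin (n - k) → (Fin n → ℂ) → ℂ)
    (hf : ∀ i z, f i z =
      (∏ j ∈ univ.filter fun j => 0 ≤ ∑ m, u j m * q i m,
        z j ^ (∑ m, u j m * q i m).toNat)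
      - (Real.exp (∑ m, a m * (q i m : ℝ)) : ℂ) *
        ∏ j ∈ univ.filter fun j => (∑ m, u j m * q i m) ≤ 0,
          z j ^ (-∑ m, u j m * q i m).toNat)
    (g : Fin (n - k) → (Fin n → ℝ) → ℝ)
    (hg : ∀ i ξ, g i ξ =
      (∏ j ∈ univ.filter fun j => 0 ≤ ∑ m, u j m * q i m,
        (Real.exp 1 * L j ξ) ^ (∑ m, u j m * q i m).toNat)
      - Real.exp (∑ m, a m * (q i m : ℝ)) *
        ∏ j ∈ univ.filter fun j => (∑ m, u j m * q i m) ≤ 0,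
          (Real.exp 1 * L j ξ) ^ (-∑ m, u j m * q i m).toNat)
    (Df : (Fin n → ℂ) → Matrix (Fin (n - k)) (Fin n) ℂ)
    (hDf : ∀ z, Df z = Matrix.of fun i j => fderiv ℂ (f i) z (Pi.single j 1))
    (Dg : (Fin n → ℝ) → Matrix (Fin (n - k)) (Fin n) ℝ)
    (hDg : ∀ ξ, Dg ξ = Matrix.of fun i j => fderiv ℝ (g i) ξ (Pi.single j 1))
    (F : (Fin k → ℂ) → (Fin n → ℂ))
    (hF : ∀ w i, F w i = Complex.exp
      (((∑ m, a m * (v i m : ℝ) : ℝ) : ℂ) + ∑ l, ((∑ m, p l m * v i m : ℤ) : ℂ) * w l)) :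
    ∀ z ∈ closure (Set.range F), ∀ ξ : Fin n → ℝ,
      (∀ j, ‖z j‖ = Real.exp 1 * L j ξ) →
      (Df z).rank = (Dg ξ).rank := by
  intro z hz ξ hξ
  set s : Fin (n - k) → Fin n → ℤ := fun i j => ∑ m, u j m * q i m
  set c : Fin (n - k) → ℝ := fun i => Real.exp (∑ m, a m * (q i m : ℝ))
  set M : Matrix (Fin n) (Fin n) ℝ := Matrix.of fun j m => Real.exp 1 * u j m
  set b : Fin n → ℝ := fun j => -(Real.exp 1 * κ j)
  have hx (y : Fin n → ℝ) : M.mulVec y + b = fun j => Real.exp 1 * L j y := by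
    ext j
    simp [M, b, hL, Matrix.mulVec, dotProduct, mul_sum, sub_eq_add_neg, mul_add, mul_assoc]
  have hDf' : Df z = binomialJacobian s (fun i => (c i : ℂ)) z := by
    rw [hDf, show f = _ from funext₂ fun i y => (hf i y).trans (binomial_eq_prod_filter _ _ _).symm]
    exact jacobian_binomial s _ z
  have hDg' : Dg ξ = binomialJacobian s c (M.mulVec ξ + b) * M := by
    rw [hDg, show g = fun i y => binomial (s i) (c i) (M.mulVec y + b) from
      funext₂ fun i y => by rw [hg, binomial_eq_prod_filter, hx]]
    exact jacobian_binomial_comp_mulVec_add s c M b ξ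
  have hM : IsUnit M.det := by
    rw [show M = Real.exp 1 • Matrix.of fun j m => (u j m : ℝ) by ext; simp [M], Matrix.det_smul]
    exact ((Real.exp_pos 1).ne'.isUnit.pow _).mul (Matrix.isUnit_det_of_right_inverse
      (of_mul_transpose_of_eq_one (fun j m => (u j m : ℝ)) (fun j m => (v j m : ℝ))
        fun i j => by exact_mod_cast hδ i j))
  obtain ⟨t, ⟨ht1, ht⟩, hzt⟩ := exists_mem_compactSubtorus_of_mem_closure_range (s := s)
    (fun i l => (sum_mul_sum_eq_of_dual u v hδ _ _).trans (hpq l i)) _ (funext₂ hF ▸ hz)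
  have hz' : z = t * (algebraMap ℝ ℂ ∘ (M.mulVec ξ + b)) := by
    ext j
    rw [Pi.mul_apply, Function.comp_apply, hx, hzt j, hξ j]
    rfl
  have ht0 (j : Fin n) : t j ≠ 0 := norm_ne_zero_iff.mp ((ht1 j).trans_ne one_ne_zero)
  rw [hDf', hDg', Matrix.rank_mul_eq_left_of_isUnit_det _ _ hM, hz',
    rank_binomialJacobian_mul _ _ _ _ ht0 ht,
    ← (binomialJacobian s c (M.mulVec ξ + b)).rank_map_algebraMap (L := ℂ), binomialJacobian_map]
  rfl
end

section
/- Let p ∈ ℤ² be a primitive vector, let B_μ = [[−1, 1], [−1, 0]] and B_σ = [[0, −1], [1, −1]] (2×2 integer matrices), and let A_{++} = {(1, b) : b ∈ ℤ, b ≥ 0} ∪ {(b, 1) : b ∈ ℤ, b ≥ 0} and A_{+−} = {(c_1, c_2) ∈ ℤ² : c_1 ≥ 0, c_2 < 0}. Then the following are equivalent: (a) each of the three vectors p, B_σ·p, and B_μ·p lies, up to overall sign, in A_{++} ∪ A_{+−}; (b) up to overall sign, p is one of (1,0), (0,1), (1,1), (1,−1), (2,1), (1,2). (This is the classification of the lines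 V = ℝp for which D̄(V) is a submanifold with corners in the Delzant polytope of ℂP², equivalently for which C̄(V) is a torus-equivariantly embedded toric manifold in ℂP².) -/
/-- Membership of an integer vector `(x, y)` in `A_{++} ∪ A_{+−}`, where
`A_{++} = {(1, b) : b ≥ 0} ∪ {(b, 1) : b ≥ 0}` and `A_{+−} = {(c₁, c₂) : c₁ ≥ 0, c₂ < 0}`. -/
def InAset (x y : ℤ) : Prop :=
  (x = 1 ∧ 0 ≤ y) ∨ (y = 1 ∧ 0 ≤ x) ∨ (0 ≤ x ∧ y < 0)

set_option maxHeartbeats 2000000 in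
/-- Classification of torus-equivariantly embedded toric manifolds in `ℂP²`:
for a primitive `p = (p₁, p₂) ∈ ℤ²`, the three vectors `p`, `B_σ p = (−p₂, p₁ − p₂)` and
`B_μ p = (−p₁ + p₂, −p₁)` all lie (up to overall sign) in `A_{++} ∪ A_{+−}` if and only if
`p` is, up to sign, one of `(1,0), (0,1), (1,1), (1,−1), (2,1), (1,2)`. -/
theorem stmt18 (p₁ p₂ : ℤ) (hp : Int.gcd p₁ p₂ = 1) :
    ((InAset p₁ p₂ ∨ InAset (-p₁) (-p₂)) ∧
     (InAset (-p₂) (p₁ - p₂) ∨ InAset p₂ (p₂ - p₁)) ∧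
     (InAset (-p₁ + p₂) (-p₁) ∨ InAset (p₁ - p₂) p₁))
    ↔
    ((p₁ = 1 ∧ p₂ = 0) ∨ (p₁ = -1 ∧ p₂ = 0) ∨
     (p₁ = 0 ∧ p₂ = 1) ∨ (p₁ = 0 ∧ p₂ = -1) ∨
     (p₁ = 1 ∧ p₂ = 1) ∨ (p₁ = -1 ∧ p₂ = -1) ∨
     (p₁ = 1 ∧ p₂ = -1) ∨ (p₁ = -1 ∧ p₂ = 1) ∨
     (p₁ = 2 ∧ p₂ = 1) ∨ (p₁ = -2 ∧ p₂ = -1) ∨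
     (p₁ = 1 ∧ p₂ = 2) ∨ (p₁ = -1 ∧ p₂ = -2)) := by
  constructor
  · intro h
    unfold InAset at h
    obtain ⟨h1, h2, h3⟩ := h
    have hb : -2 ≤ p₁ ∧ p₁ ≤ 2 ∧ -2 ≤ p₂ ∧ p₂ ≤ 2 := by omega
    obtain ⟨b1, b2, b3, b4⟩ := hb
    interval_cases p₁ <;> interval_cases p₂ <;> omega
  · intro h
    unfold InAset
    obtain ⟨rfl,rfl⟩|⟨rfl,rfl⟩|⟨rfl,rfl⟩|⟨rfl,rfl⟩|⟨rfl,rfl⟩|⟨rfl,rfl⟩|⟨rfl,rfl⟩|⟨rfl,rfl⟩|⟨rfl,rfl⟩|⟨rfl,rfl⟩|⟨rfl,rfl⟩|⟨rfl,rfl⟩ := h <;> norm_num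
end
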